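/- arXiv:1109.1798 — 2 statements merged into one kernel-verified Lean document; each statement's English description precedes it below -/
import Mathlib

section
/- Let g > 0, σ > 0 and ρ̃ ∈ ℝ, and assume that either ρ̃ ≤ 0, or ρ̃ > 0 and σ > σ_c := ρ̃ g max{L₁², L₂²}. Then there exists a constant C > 0, depending only on σ, ρ̃, g, L₁, L₂, such that for every C¹ horizontally periodic function f : ℝ² → ℝ with ∫_Q f = 0 one has σ ∫_Q |∇f|² − ρ̃ g ∫_Q f² ≥ C ( ∫_Q f² + ∫_Q |∇f|² ). -/
/-!
The one-dimensional Wirtinger inequality `∫ f² ≤ (T / 2π)² ∫ f'²` for a zero-mean `T`-periodic `f`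
follows from Parseval, since the `n`-th Fourier coefficient of `f'` is `2πin / T` times that of
`f`. On the cell, write `f = m(x₁) + (f - m)` with `m` the mean of `f` in `x₂`: Wirtinger in `x₂`
bounds `∫ (f - m)²` by `L₂² ∫ (∂₂f)²`, and Wirtinger in `x₁` applied to `m`, whose derivative is
the `x₂`-mean of `∂₁f` and so has square at most the `x₂`-mean of `(∂₁f)²`, bounds the rest by
`L₁² ∫ (∂₁f)²`. Hence `∫ f² ≤ M ∫ |∇f|²` with `M = max{L₁², L₂²}`, and
`C = (σ - max{ρ̃, 0} g M) / (M + 1)` works.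
-/

open MeasureTheory

/-- The periodic cell `Q = [0, 2πL₁] × [0, 2πL₂]`. -/
def Qcell (L₁ L₂ : ℝ) : Set (ℝ × ℝ) :=
  Set.Icc 0 (2 * Real.pi * L₁) ×ˢ Set.Icc 0 (2 * Real.pi * L₂)

open Real Set

theorem norm_fourierCoeffOn_le_of_hasDerivAt {a b : ℝ} (hab : a < b) {f f' : ℝ → ℂ}
    (hf : ∀ x ∈ uIcc a b, HasDerivAt f (f' x) x) (hf' : IntervalIntegrable f' volume a b)
    (hper : f a = f b) (hmean : ∫ x in a..b, f x = 0) (n : ℤ) :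
    ‖fourierCoeffOn hab f n‖ ≤ (b - a) / (2 * π) * ‖fourierCoeffOn hab f' n‖ := by
  rcases eq_or_ne n 0 with rfl | hn
  · simp only [fourierCoeffOn_eq_integral, neg_zero, fourier_zero, one_smul, hmean, smul_zero,
      norm_zero]
    positivity
  have hn1 : (1 : ℝ) ≤ |(n : ℝ)| := by exact_mod_cast Int.one_le_abs hn
  rw [fourierCoeffOn_of_hasDerivAt hab hn hf hf', hper, sub_self, mul_zero, zero_sub,
    ← Complex.ofReal_sub]
  simp only [one_div, norm_mul, norm_inv, norm_neg, Complex.norm_I, Complex.norm_intCast,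
    Complex.norm_real, Complex.norm_ofNat, Real.norm_eq_abs, abs_of_pos pi_pos,
    abs_of_pos (sub_pos.2 hab), mul_one]
  rw [inv_mul_eq_div, div_mul_eq_mul_div]
  exact div_le_div_of_nonneg_left (by positivity) (by positivity)
    (le_mul_of_one_le_right (by positivity) hn1)

theorem hasSum_sq_fourierCoeffOn_ofReal {a b : ℝ} (hab : a < b) {g : ℝ → ℝ}
    (hg : ContinuousOn g (Icc a b)) :
    HasSum (fun n => ‖fourierCoeffOn hab (fun x => (g x : ℂ)) n‖ ^ 2)
      ((b - a)⁻¹ * ∫ x in a..b, g x ^ 2) := by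
  have hG : ContinuousOn (fun x => (g x : ℂ)) (Icc a b) :=
    Complex.continuous_ofReal.comp_continuousOn hg
  have hL2 : MemLp (fun x => (g x : ℂ)) 2 (volume.restrict (Ioc a b)) := by
    rw [memLp_two_iff_integrable_sq_norm
      ((hG.mono Ioc_subset_Icc_self).aestronglyMeasurable measurableSet_Ioc)]
    exact ((hG.norm.pow 2).integrableOn_Icc).mono_set Ioc_subset_Icc_self
  simpa [Complex.norm_real, sq_abs] using hasSum_sq_fourierCoeffOn hab hL2

theorem integral_sq_le_wirtinger {a b : ℝ} (hab : a < b) {f f' : ℝ → ℝ}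
    (hf : ∀ x ∈ uIcc a b, HasDerivAt f (f' x) x) (hf' : ContinuousOn f' (uIcc a b))
    (hper : f a = f b) (hmean : ∫ x in a..b, f x = 0) :
    ∫ x in a..b, f x ^ 2 ≤ ((b - a) / (2 * π)) ^ 2 * ∫ x in a..b, f' x ^ 2 := by
  have hcoeff (n : ℤ) := norm_fourierCoeffOn_le_of_hasDerivAt hab (f := fun x => (f x : ℂ))
    (fun x hx => (hf x hx).ofReal_comp)
    ((Complex.continuous_ofReal.comp_continuousOn hf').intervalIntegrable)
    (by rw [hper]) (by rw [intervalIntegral.integral_ofReal, hmean, Complex.ofReal_zero]) n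
  have hf_cont : ContinuousOn f (Icc a b) := fun x hx =>
    (hf x (Icc_subset_uIcc hx)).continuousAt.continuousWithinAt
  have key := hasSum_le (fun n => (pow_le_pow_left₀ (norm_nonneg _) (hcoeff n) 2).trans_eq
      (mul_pow _ _ 2)) (hasSum_sq_fourierCoeffOn_ofReal hab hf_cont)
    ((hasSum_sq_fourierCoeffOn_ofReal hab (hf'.mono Icc_subset_uIcc)).mul_left _)
  rw [mul_left_comm, mul_le_mul_iff_right₀ (inv_pos.2 (sub_pos.2 hab))] at key
  exact key

theorem integral_sq_eq_integral_sub_sq_add {a b m : ℝ} {g : ℝ → ℝ}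
    (hg : ContinuousOn g (uIcc a b)) (hm : ∫ x in a..b, g x = (b - a) * m) :
    ∫ x in a..b, g x ^ 2 = (∫ x in a..b, (g x - m) ^ 2) + (b - a) * m ^ 2 := by
  have hg1 : IntervalIntegrable g volume a b := hg.intervalIntegrable
  have hg2 : IntervalIntegrable (fun x => g x ^ 2) volume a b := (hg.pow 2).intervalIntegrable
  have hexpand : ∫ x in a..b, (g x - m) ^ 2
      = (∫ x in a..b, g x ^ 2) - 2 * m * (∫ x in a..b, g x) + (b - a) * m ^ 2 := by
    simp only [sub_sq, mul_right_comm _ _ m]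
    rw [intervalIntegral.integral_add (hg2.sub (hg1.const_mul _)) intervalIntegrable_const,
      intervalIntegral.integral_sub hg2 (hg1.const_mul _), intervalIntegral.integral_const_mul,
      intervalIntegral.integral_const, smul_eq_mul]
  rw [hexpand, hm]
  ring

theorem hasDerivAt_intervalIntegral_of_continuous {E : Type*} [NormedAddCommGroup E]
    [NormedSpace ℝ E] {F F' : ℝ → ℝ → E} (hF : Continuous (Function.uncurry F))
    (hF' : Continuous (Function.uncurry F')) (hderiv : ∀ x y, HasDerivAt (F · y) (F' x y) x)
    (a b x₀ : ℝ) :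
    HasDerivAt (fun x => ∫ y in a..b, F x y) (∫ y in a..b, F' x₀ y) x₀ := by
  obtain ⟨K, hK⟩ := (isCompact_closedBall x₀ 1 |>.prod (isCompact_uIcc (a := a) (b := b))
    ).exists_bound_of_continuousOn hF'.continuousOn
  refine (intervalIntegral.hasDerivAt_integral_of_dominated_loc_of_deriv_le
    (bound := fun _ => K) (Metric.closedBall_mem_nhds x₀ one_pos)
    (.of_forall fun x => (hF.comp (Continuous.prodMk_right x)).aestronglyMeasurable)
    ((hF.comp (Continuous.prodMk_right x₀)).intervalIntegrable _ _)
    (hF'.comp (Continuous.prodMk_right x₀)).aestronglyMeasurable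
    (.of_forall fun y hy x hx => hK (x, y) ⟨hx, uIoc_subset_uIcc hy⟩)
    intervalIntegrable_const (.of_forall fun y _ x _ => hderiv x y)).2

theorem setIntegral_Icc_prod_eq_intervalIntegral {E : Type*} [NormedAddCommGroup E]
    [NormedSpace ℝ E] {a b c d : ℝ} (hab : a ≤ b) (hcd : c ≤ d) {h : ℝ × ℝ → E}
    (hh : Continuous h) :
    ∫ p in Icc a b ×ˢ Icc c d, h p = ∫ x in a..b, ∫ y in c..d, h (x, y) := by
  rw [Measure.volume_eq_prod, setIntegral_prod h, integral_Icc_eq_integral_Ioc,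
    ← intervalIntegral.integral_of_le hab]
  · refine intervalIntegral.integral_congr fun x _ => ?_
    simp only [integral_Icc_eq_integral_Ioc, ← intervalIntegral.integral_of_le hcd]
  · rw [← Measure.volume_eq_prod]
    exact hh.continuousOn.integrableOn_compact (isCompact_Icc.prod isCompact_Icc)

theorem integral_sq_le_poincare_rect {a b c d : ℝ} (hab : a < b) (hcd : c < d)
    {f f₁ f₂ : ℝ × ℝ → ℝ} (hf : Continuous f) (hf₁ : Continuous f₁) (hf₂ : Continuous f₂)
    (hd₁ : ∀ x y, HasDerivAt (fun t => f (t, y)) (f₁ (x, y)) x)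
    (hd₂ : ∀ x y, HasDerivAt (fun t => f (x, t)) (f₂ (x, y)) y)
    (hper₁ : ∀ y, f (a, y) = f (b, y)) (hper₂ : ∀ x, f (x, c) = f (x, d))
    (hmean : ∫ x in a..b, ∫ y in c..d, f (x, y) = 0) :
    ∫ x in a..b, ∫ y in c..d, f (x, y) ^ 2 ≤
      ((b - a) / (2 * π)) ^ 2 * (∫ x in a..b, ∫ y in c..d, f₁ (x, y) ^ 2) +
      ((d - c) / (2 * π)) ^ 2 * ∫ x in a..b, ∫ y in c..d, f₂ (x, y) ^ 2 := by
  have hdc : 0 < d - c := sub_pos.2 hcd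
  set m : ℝ → ℝ := fun x => (d - c)⁻¹ * ∫ y in c..d, f (x, y) with hm_def
  set m' : ℝ → ℝ := fun x => (d - c)⁻¹ * ∫ y in c..d, f₁ (x, y)
  have hm (x : ℝ) : ∫ y in c..d, f (x, y) = (d - c) * m x :=
    (mul_inv_cancel_left₀ hdc.ne' _).symm
  have hm' (x : ℝ) : ∫ y in c..d, f₁ (x, y) = (d - c) * m' x :=
    (mul_inv_cancel_left₀ hdc.ne' _).symm
  have hm_deriv (x : ℝ) : HasDerivAt m (m' x) x :=
    (hasDerivAt_intervalIntegral_of_continuous (F := fun x y => f (x, y))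
      (F' := fun x y => f₁ (x, y)) hf hf₁ hd₁ c d x).const_mul _
  have hslice (x : ℝ) : ∫ y in c..d, f (x, y) ^ 2 ≤
      ((d - c) / (2 * π)) ^ 2 * (∫ y in c..d, f₂ (x, y) ^ 2) + (d - c) * m x ^ 2 := by
    rw [integral_sq_eq_integral_sub_sq_add (by fun_prop) (hm x)]
    gcongr
    refine integral_sq_le_wirtinger hcd (fun y _ => (hd₂ x y).sub_const _) (by fun_prop)
      (by rw [hper₂]) ?_
    rw [intervalIntegral.integral_sub ((by fun_prop : Continuous _).intervalIntegrable _ _)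
      intervalIntegrable_const, hm, intervalIntegral.integral_const, smul_eq_mul, sub_self]
  have hm_bound (x : ℝ) : (d - c) * m' x ^ 2 ≤ ∫ y in c..d, f₁ (x, y) ^ 2 := by
    rw [integral_sq_eq_integral_sub_sq_add (by fun_prop) (hm' x), le_add_iff_nonneg_left]
    exact intervalIntegral.integral_nonneg hcd.le fun y _ => sq_nonneg _
  have hm_wirtinger : ∫ x in a..b, m x ^ 2 ≤ ((b - a) / (2 * π)) ^ 2 * ∫ x in a..b, m' x ^ 2 := by
    refine integral_sq_le_wirtinger hab (fun x _ => hm_deriv x) (by fun_prop) ?_ ?_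
    · simp only [hm_def, hper₁]
    · rw [intervalIntegral.integral_const_mul, hmean, mul_zero]
  have hint {g : ℝ → ℝ} (hg : Continuous g) : IntervalIntegrable g volume a b :=
    hg.intervalIntegrable a b
  calc ∫ x in a..b, ∫ y in c..d, f (x, y) ^ 2
      ≤ ∫ x in a..b,
          (((d - c) / (2 * π)) ^ 2 * (∫ y in c..d, f₂ (x, y) ^ 2) + (d - c) * m x ^ 2) :=
        intervalIntegral.integral_mono_on hab.le (hint (by fun_prop)) (hint (by fun_prop))
          fun x _ => hslice x
    _ = ((d - c) / (2 * π)) ^ 2 * (∫ x in a..b, ∫ y in c..d, f₂ (x, y) ^ 2)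
        + (d - c) * ∫ x in a..b, m x ^ 2 := by
      rw [intervalIntegral.integral_add (hint (by fun_prop)) (hint (by fun_prop)),
        intervalIntegral.integral_const_mul, intervalIntegral.integral_const_mul]
    _ ≤ ((d - c) / (2 * π)) ^ 2 * (∫ x in a..b, ∫ y in c..d, f₂ (x, y) ^ 2)
        + ((b - a) / (2 * π)) ^ 2 * ∫ x in a..b, (d - c) * m' x ^ 2 := by
      rw [intervalIntegral.integral_const_mul, mul_left_comm]
      gcongr
    _ ≤ _ := by
      rw [add_comm]
      gcongr
      exact intervalIntegral.integral_mono_on hab.le (hint (by fun_prop)) (hint (by fun_prop))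
        fun x _ => hm_bound x

theorem integral_sq_le_poincare_Qcell {L₁ L₂ : ℝ} (hL₁ : 0 < L₁) (hL₂ : 0 < L₂)
    {f : ℝ × ℝ → ℝ} (hf : ContDiff ℝ 1 f)
    (hper₁ : ∀ x₁ x₂ : ℝ, f (x₁ + 2 * π * L₁, x₂) = f (x₁, x₂))
    (hper₂ : ∀ x₁ x₂ : ℝ, f (x₁, x₂ + 2 * π * L₂) = f (x₁, x₂))
    (hmean : ∫ x in Qcell L₁ L₂, f x = 0) :
    ∫ x in Qcell L₁ L₂, f x ^ 2 ≤ max (L₁ ^ 2) (L₂ ^ 2) *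
      ∫ x in Qcell L₁ L₂, (fderiv ℝ f x (1, 0) ^ 2 + fderiv ℝ f x (0, 1) ^ 2) := by
  have hf₁ : Continuous fun p => fderiv ℝ f p (1, 0) :=
    (hf.continuous_fderiv one_ne_zero).clm_apply continuous_const
  have hf₂ : Continuous fun p => fderiv ℝ f p (0, 1) :=
    (hf.continuous_fderiv one_ne_zero).clm_apply continuous_const
  have hd₁ (x y : ℝ) : HasDerivAt (fun t => f (t, y)) (fderiv ℝ f (x, y) (1, 0)) x :=
    (hf.differentiable one_ne_zero (x, y)).hasFDerivAt.comp_hasDerivAt x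
      ((hasDerivAt_id x).prodMk (hasDerivAt_const x y))
  have hd₂ (x y : ℝ) : HasDerivAt (fun t => f (x, t)) (fderiv ℝ f (x, y) (0, 1)) y :=
    (hf.differentiable one_ne_zero (x, y)).hasFDerivAt.comp_hasDerivAt y
      ((hasDerivAt_const y x).prodMk (hasDerivAt_id y))
  have hcell {h : ℝ × ℝ → ℝ} (hh : Continuous h) := setIntegral_Icc_prod_eq_intervalIntegral
    (by positivity : 0 ≤ 2 * π * L₁) (by positivity : 0 ≤ 2 * π * L₂) hh
  have hQ {h : ℝ × ℝ → ℝ} (hh : Continuous h) : IntegrableOn h (Qcell L₁ L₂) :=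
    hh.continuousOn.integrableOn_compact (isCompact_Icc.prod isCompact_Icc)
  have hpoinc := integral_sq_le_poincare_rect (a := 0) (b := 2 * π * L₁) (c := 0)
    (d := 2 * π * L₂) (by positivity) (by positivity) hf.continuous hf₁ hf₂
    hd₁ hd₂ (fun y => by simpa using (hper₁ 0 y).symm) (fun x => by simpa using (hper₂ x 0).symm)
    (by rwa [← hcell hf.continuous])
  have hcancel (L : ℝ) : 2 * π * L / (2 * π) = L := mul_div_cancel_left₀ L two_pi_pos.ne'
  simp only [sub_zero, hcancel] at hpoinc
  rw [integral_add (hQ (by fun_prop)) (hQ (by fun_prop))]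
  unfold Qcell
  rw [hcell (by fun_prop), hcell (by fun_prop), hcell (by fun_prop)]
  have hnonneg (h : ℝ → ℝ → ℝ) :
      0 ≤ ∫ x in (0 : ℝ)..2 * π * L₁, ∫ y in (0 : ℝ)..2 * π * L₂, h x y ^ 2 :=
    intervalIntegral.integral_nonneg (by positivity) fun x _ =>
      intervalIntegral.integral_nonneg (by positivity) fun y _ => sq_nonneg _
  refine hpoinc.trans ?_
  rw [mul_add]
  gcongr
  exacts [hnonneg _, le_max_left .., hnonneg _, le_max_right ..]

theorem coercive_of_poincare {σ r k M F D : ℝ} (hM : 0 ≤ M) (hF : 0 ≤ F) (hFD : F ≤ M * D)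
    (hr : r ≤ k) (hk : 0 ≤ k) (hσ : k * M ≤ σ) :
    (σ - k * M) / (M + 1) * (F + D) ≤ σ * D - r * F := by
  calc (σ - k * M) / (M + 1) * (F + D) ≤ (σ - k * M) / (M + 1) * (M * D + D) := by
        gcongr
    _ = (σ - k * M) * D := by field_simp
    _ ≤ σ * D - r * F := by
      nlinarith [mul_le_mul_of_nonneg_left hFD hk, mul_le_mul_of_nonneg_right hr hF]

/-- Coercivity above the critical surface tension: if `g > 0`, `σ > 0` and either `ρ̃ ≤ 0`,
or `ρ̃ > 0` and `σ > σ_c = ρ̃ g max{L₁², L₂²}`, then there is `C > 0` (depending only on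
`σ, ρ̃, g, L₁, L₂`) so that for every zero-average `C¹` horizontally periodic `f`:
`σ ∫_Q |∇f|² − ρ̃ g ∫_Q f² ≥ C (∫_Q f² + ∫_Q |∇f|²)`. -/
theorem stmt_2 (L₁ L₂ : ℝ) (hL₁ : 0 < L₁) (hL₂ : 0 < L₂)
    (g σ ρt : ℝ) (hg : 0 < g) (hσ : 0 < σ)
    (hcase : ρt ≤ 0 ∨ (0 < ρt ∧ ρt * g * max (L₁ ^ 2) (L₂ ^ 2) < σ)) :
    ∃ C > 0, ∀ f : ℝ × ℝ → ℝ, ContDiff ℝ 1 f →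
      (∀ x₁ x₂ : ℝ, f (x₁ + 2 * Real.pi * L₁, x₂) = f (x₁, x₂)) →
      (∀ x₁ x₂ : ℝ, f (x₁, x₂ + 2 * Real.pi * L₂) = f (x₁, x₂)) →
      (∫ x in Qcell L₁ L₂, f x) = 0 →
      σ * (∫ x in Qcell L₁ L₂, ((fderiv ℝ f x (1, 0)) ^ 2 + (fderiv ℝ f x (0, 1)) ^ 2))
          - ρt * g * (∫ x in Qcell L₁ L₂, (f x) ^ 2)
        ≥ C * ((∫ x in Qcell L₁ L₂, (f x) ^ 2)
            + ∫ x in Qcell L₁ L₂, ((fderiv ℝ f x (1, 0)) ^ 2 + (fderiv ℝ f x (0, 1)) ^ 2)) := by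
  set M := max (L₁ ^ 2) (L₂ ^ 2)
  have hk : max ρt 0 * g * M < σ := by
    rcases hcase with hρ | ⟨hρ, hlt⟩
    · rwa [max_eq_right hρ, zero_mul, zero_mul]
    · rwa [max_eq_left hρ.le]
  refine ⟨(σ - max ρt 0 * g * M) / (M + 1), div_pos (sub_pos.2 hk) (by positivity),
    fun f hf hper₁ hper₂ hmean => ?_⟩
  exact coercive_of_poincare (by positivity) (integral_nonneg fun x => sq_nonneg _)
    (integral_sq_le_poincare_Qcell hL₁ hL₂ hf hper₁ hper₂ hmean)
    (mul_le_mul_of_nonneg_right (le_max_left _ _) hg.le) (by positivity) hk.le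
end

section
/- Sobolev product estimate in Fourier form (two-dimensional torus): let 0 ≤ r ≤ s₁ ≤ s₂ be real numbers with s₁ > 1. Then there exists a constant C > 0, depending only on r, s₁, s₂, such that for all c, d : ℤ² → ℂ with A² := Σ_{n ∈ ℤ²} (1 + |n|²)^{s₁} |c(n)|² < ∞ and B² := Σ_{n ∈ ℤ²} (1 + |n|²)^{s₂} |d(n)|² < ∞, the convolution e(n) := Σ_{m ∈ ℤ²} c(m) d(n − m) converges absolutely for every n, and Σ_{n ∈ ℤ²} (1 + |n|²)^{r} |e(n)|² ≤ C · A² · B². -/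
/-!
Since `1 + |n|² ≤ 2 ((1 + |m|²) + (1 + |n - m|²))`, the weight `⟨n⟩^r` at the output splits as
`⟨n⟩^r ≲ ⟨m⟩^r + ⟨n - m⟩^r`, so the weighted convolution `⟨·⟩^{r/2} (|c| ∗ |d|)` is bounded by
`(⟨·⟩^{r/2} |c|) ∗ |d| + |c| ∗ (⟨·⟩^{r/2} |d|)`. Young's inequality `‖F ∗ G‖₂ ≤ ‖F‖₁ ‖G‖₂` bounds
each piece, with the `ℓ¹` norms of `c` and `d` controlled by Cauchy–Schwarz:
`(Σ |c|)² ≤ (Σ ⟨n⟩^{-s₁}) · A²`, where `Σ_{ℤ²} ⟨n⟩^{-s₁} < ∞` exactly because `s₁ > 1`.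
All estimates are made for `‖c‖ₑ, ‖d‖ₑ` in `ℝ≥0∞`, where no summability has to be tracked;
finiteness of the final bound then yields the absolute convergence of the convolution.
-/

open ENNReal MeasureTheory

def sobolevWeight (n : ℤ × ℤ) : ℝ :=
  1 + (((n.1 : ℝ)) ^ 2 + ((n.2 : ℝ)) ^ 2)

namespace ENNReal

variable {ι : Type*}

theorem tsum_mul_le_rpow_mul_rpow (f g : ι → ℝ≥0∞) :
    ∑' i, f i * g i ≤
      (∑' i, f i ^ (2 : ℝ)) ^ (1 / 2 : ℝ) * (∑' i, g i ^ (2 : ℝ)) ^ (1 / 2 : ℝ) := by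
  let _ : MeasurableSpace ι := ⊤
  have := lintegral_mul_le_Lp_mul_Lq Measure.count Real.HolderConjugate.two_two
    (measurable_from_top (f := f)).aemeasurable (measurable_from_top (f := g)).aemeasurable
  simpa only [lintegral_count' measurable_from_top, Pi.mul_apply] using this

theorem sq_tsum_mul_le_tsum_mul_tsum_mul_sq (a b : ι → ℝ≥0∞) :
    (∑' i, a i * b i) ^ 2 ≤ (∑' i, a i) * ∑' i, a i * b i ^ 2 := by
  have hsqrt : ∀ x : ℝ≥0∞, (x ^ (1 / 2 : ℝ)) ^ (2 : ℝ) = x := fun x => by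
    simpa using ENNReal.rpow_inv_rpow two_ne_zero x
  have h := tsum_mul_le_rpow_mul_rpow (fun i => a i ^ (1 / 2 : ℝ))
    (fun i => a i ^ (1 / 2 : ℝ) * b i)
  have hab : ∀ i, a i ^ (1 / 2 : ℝ) * (a i ^ (1 / 2 : ℝ) * b i) = a i * b i := fun i => by
    rw [← mul_assoc, ← ENNReal.rpow_add_of_nonneg _ _ (by norm_num) (by norm_num)]
    norm_num
  have hab2 : ∀ i, (a i ^ (1 / 2 : ℝ) * b i) ^ (2 : ℝ) = a i * b i ^ 2 := fun i => by
    rw [ENNReal.mul_rpow_of_nonneg _ _ zero_le_two, hsqrt, ENNReal.rpow_two]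
  simp only [hab, hab2, hsqrt] at h
  calc (∑' i, a i * b i) ^ 2 = (∑' i, a i * b i) ^ (2 : ℝ) := (ENNReal.rpow_two _).symm
    _ ≤ _ := ENNReal.rpow_le_rpow h zero_le_two
    _ = _ := by rw [ENNReal.mul_rpow_of_nonneg _ _ zero_le_two, hsqrt, hsqrt]

theorem sq_tsum_le_tsum_inv_mul_tsum_mul_sq (v f : ι → ℝ≥0∞) (hv₀ : ∀ i, v i ≠ 0)
    (hv : ∀ i, v i ≠ ⊤) : (∑' i, f i) ^ 2 ≤ (∑' i, (v i)⁻¹) * ∑' i, v i * f i ^ 2 := by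
  have := sq_tsum_mul_le_tsum_mul_tsum_mul_sq (fun i => (v i)⁻¹) (fun i => v i * f i)
  have hcancel : ∀ i, (v i)⁻¹ * v i = 1 := fun i => ENNReal.inv_mul_cancel (hv₀ i) (hv i)
  convert this using 3 <;> funext i
  · rw [← mul_assoc, hcancel, one_mul]
  · rw [mul_pow, sq (v i), ← mul_assoc, ← mul_assoc, hcancel, one_mul]

theorem ne_top_of_tsum_mul_sq_le {w x : ι → ℝ≥0∞} {M : ℝ≥0∞} (hw : ∀ i, w i ≠ 0)
    (hM : M ≠ ⊤) (h : ∑' i, w i * x i ^ 2 ≤ M) (i : ι) : x i ≠ ⊤ := fun hx =>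
  hM (top_le_iff.mp (((ENNReal.le_tsum i).trans h).trans'
    (by rw [hx, ENNReal.top_pow two_ne_zero, ENNReal.mul_top (hw i)])))

theorem add_sq_le_two_mul (a b : ℝ≥0∞) : (a + b) ^ 2 ≤ 2 * (a ^ 2 + b ^ 2) := by
  have := ENNReal.rpow_add_le_mul_rpow_add_rpow a b one_le_two
  norm_num at this
  exact_mod_cast this

section AddGroup

variable {G : Type*} [AddGroup G]

noncomputable def conv (f g : G → ℝ≥0∞) (n : G) : ℝ≥0∞ := ∑' m, f m * g (n - m)

theorem conv_enorm {E : Type*} [SeminormedRing E] [NormMulClass E] (c d : G → E) (n : G) :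
    conv (‖c ·‖ₑ) (‖d ·‖ₑ) n = ∑' m, ‖c m * d (n - m)‖ₑ := by
  simp only [conv, enorm_mul]

theorem tsum_conv_sq_le (f g : G → ℝ≥0∞) :
    ∑' n, conv f g n ^ 2 ≤ (∑' m, f m) ^ 2 * ∑' k, g k ^ 2 :=
  calc ∑' n, conv f g n ^ 2
      ≤ ∑' n, (∑' m, f m) * ∑' m, f m * g (n - m) ^ 2 :=
        ENNReal.tsum_le_tsum fun n => sq_tsum_mul_le_tsum_mul_tsum_mul_sq _ _
    _ = (∑' m, f m) * ∑' m, f m * ∑' n, g (n - m) ^ 2 := by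
        rw [ENNReal.tsum_mul_left, ENNReal.tsum_comm]
        simp only [ENNReal.tsum_mul_left]
    _ = (∑' m, f m) * ∑' m, f m * ∑' k, g k ^ 2 := by
        congr 1
        exact tsum_congr fun m => congrArg _ ((Equiv.subRight m).tsum_eq fun k => g k ^ 2)
    _ = (∑' m, f m) ^ 2 * ∑' k, g k ^ 2 := by rw [ENNReal.tsum_mul_right]; ring

end AddGroup

section AddCommGroup

variable {G : Type*} [AddCommGroup G]

theorem conv_comm (f g : G → ℝ≥0∞) : conv f g = conv g f := by
  funext n
  rw [conv, ← (Equiv.subLeft n).tsum_eq]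
  simp only [conv, Equiv.subLeft_apply]
  congr 1; funext m; rw [sub_sub_self, mul_comm]

theorem tsum_mul_conv_sq_le (ω : G → ℝ≥0∞) (κ : ℝ≥0∞)
    (hω : ∀ n m, ω n ≤ κ * (ω m + ω (n - m))) (f g : G → ℝ≥0∞) :
    ∑' n, (ω n * conv f g n) ^ 2 ≤
      2 * κ ^ 2 * ((∑' m, g m) ^ 2 * ∑' m, (ω m * f m) ^ 2 +
        (∑' m, f m) ^ 2 * ∑' m, (ω m * g m) ^ 2) := by
  have hsplit : ∀ n, ω n * conv f g n ≤
      κ * (conv (fun m => ω m * f m) g n + conv f (fun m => ω m * g m) n) := fun n =>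
    calc ω n * conv f g n = ∑' m, ω n * (f m * g (n - m)) := ENNReal.tsum_mul_left.symm
      _ ≤ ∑' m, κ * (ω m + ω (n - m)) * (f m * g (n - m)) :=
        ENNReal.tsum_le_tsum fun m => by gcongr; exact hω n m
      _ = _ := by
        simp only [conv, ← ENNReal.tsum_mul_left, ← ENNReal.tsum_add]
        congr 1; funext m; ring
  calc ∑' n, (ω n * conv f g n) ^ 2
      ≤ ∑' n, 2 * κ ^ 2 * (conv g (fun m => ω m * f m) n ^ 2 +
          conv f (fun m => ω m * g m) n ^ 2) := by
        refine ENNReal.tsum_le_tsum fun n => ?_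
        calc (ω n * conv f g n) ^ 2
            ≤ (κ * (conv (fun m => ω m * f m) g n + conv f (fun m => ω m * g m) n)) ^ 2 :=
              pow_le_pow_left₀ zero_le (hsplit n) 2
          _ ≤ κ ^ 2 * (2 * (conv g (fun m => ω m * f m) n ^ 2 +
                conv f (fun m => ω m * g m) n ^ 2)) := by
              rw [mul_pow, conv_comm _ g]; gcongr; exact add_sq_le_two_mul _ _
          _ = _ := by ring
    _ ≤ _ := by
        rw [ENNReal.tsum_mul_left, ENNReal.tsum_add]
        gcongr <;> exact tsum_conv_sq_le _ _

end AddCommGroup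

end ENNReal

theorem one_le_sobolevWeight (n : ℤ × ℤ) : 1 ≤ sobolevWeight n := by
  unfold sobolevWeight; exact le_add_of_nonneg_right (by positivity)

theorem sobolevWeight_pos (n : ℤ × ℤ) : 0 < sobolevWeight n :=
  zero_lt_one.trans_le (one_le_sobolevWeight n)

theorem sobolevWeight_rpow_mul_sq_nonneg (s : ℝ) (z : ℂ) (n : ℤ × ℤ) :
    0 ≤ sobolevWeight n ^ s * ‖z‖ ^ 2 :=
  mul_nonneg (Real.rpow_nonneg (sobolevWeight_pos n).le s) (sq_nonneg _)

theorem sobolevWeight_le_two_mul_add (n m : ℤ × ℤ) :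
    sobolevWeight n ≤ 2 * (sobolevWeight m + sobolevWeight (n - m)) := by
  simp only [sobolevWeight, Prod.fst_sub, Prod.snd_sub, Int.cast_sub]
  nlinarith [sq_nonneg ((n.1 : ℝ) - 2 * m.1), sq_nonneg ((n.2 : ℝ) - 2 * m.2)]

theorem summable_one_add_sq_rpow_neg {t : ℝ} (ht : 1 < 2 * t) :
    Summable fun k : ℤ => (1 + (k : ℝ) ^ 2) ^ (-t) := by
  refine Summable.of_norm_bounded_eventually (Real.summable_abs_int_rpow ht) ?_
  filter_upwards [Set.Finite.compl_mem_cofinite (Set.finite_singleton (0 : ℤ))] with k hk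
  have hk : (k : ℝ) ≠ 0 := by simpa using hk
  rw [Real.norm_of_nonneg (by positivity), show -(2 * t) = 2 * -t by ring,
    Real.rpow_mul (abs_nonneg _), Real.rpow_two, sq_abs]
  exact Real.rpow_le_rpow_of_nonpos (by positivity) (le_add_of_nonneg_left zero_le_one)
    (by linarith)

theorem sobolevWeight_rpow_neg_le {s : ℝ} (hs : 0 ≤ s) (n : ℤ × ℤ) :
    sobolevWeight n ^ (-s) ≤
      (1 + (n.1 : ℝ) ^ 2) ^ (-(s / 2)) * (1 + (n.2 : ℝ) ^ 2) ^ (-(s / 2)) := by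
  have hprod : (1 + (n.1 : ℝ) ^ 2) * (1 + (n.2 : ℝ) ^ 2) ≤ sobolevWeight n ^ (2 : ℝ) := by
    rw [Real.rpow_two, sobolevWeight]
    nlinarith [sq_nonneg ((n.1 : ℝ) ^ 2), sq_nonneg ((n.2 : ℝ) ^ 2), sq_nonneg ((n.1 : ℝ) * n.2)]
  calc sobolevWeight n ^ (-s) = (sobolevWeight n ^ (2 : ℝ)) ^ (-(s / 2)) := by
        rw [← Real.rpow_mul (sobolevWeight_pos n).le]; ring_nf
    _ ≤ ((1 + (n.1 : ℝ) ^ 2) * (1 + (n.2 : ℝ) ^ 2)) ^ (-(s / 2)) :=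
        Real.rpow_le_rpow_of_nonpos (by positivity) hprod (by linarith)
    _ = _ := Real.mul_rpow (by positivity) (by positivity)

theorem summable_sobolevWeight_rpow_neg {s : ℝ} (hs : 1 < s) :
    Summable fun n => sobolevWeight n ^ (-s) := by
  have h := summable_one_add_sq_rpow_neg (t := s / 2) (by linarith)
  refine Summable.of_nonneg_of_le (fun n => (Real.rpow_pos_of_pos (sobolevWeight_pos n) _).le)
    (sobolevWeight_rpow_neg_le (by linarith)) ?_
  exact h.mul_of_nonneg h (fun _ => by positivity) (fun _ => by positivity)

theorem tsum_sobolevWeight_rpow_neg_pos {s : ℝ} (hs : 1 < s) :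
    0 < ∑' n, sobolevWeight n ^ (-s) :=
  (summable_sobolevWeight_rpow_neg hs).tsum_pos
    (fun n => (Real.rpow_pos_of_pos (sobolevWeight_pos n) _).le) 0
    (Real.rpow_pos_of_pos (sobolevWeight_pos 0) _)

noncomputable def sobolevWeightₑ (n : ℤ × ℤ) : ℝ≥0∞ := ENNReal.ofReal (sobolevWeight n)

theorem one_le_sobolevWeightₑ (n : ℤ × ℤ) : 1 ≤ sobolevWeightₑ n :=
  ENNReal.one_le_ofReal.mpr (one_le_sobolevWeight n)

theorem sobolevWeightₑ_ne_top (n : ℤ × ℤ) : sobolevWeightₑ n ≠ ⊤ := ENNReal.ofReal_ne_top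

theorem sobolevWeightₑ_rpow_ne_zero (s : ℝ) (n : ℤ × ℤ) : sobolevWeightₑ n ^ s ≠ 0 :=
  (ENNReal.rpow_pos (zero_lt_one.trans_le (one_le_sobolevWeightₑ n))
    (sobolevWeightₑ_ne_top n)).ne'

theorem sobolevWeightₑ_rpow_le {t : ℝ} (ht : 0 ≤ t) (n m : ℤ × ℤ) :
    sobolevWeightₑ n ^ t ≤ 4 ^ t * (sobolevWeightₑ m ^ t + sobolevWeightₑ (n - m) ^ t) := by
  have hmax : sobolevWeightₑ n ≤ 4 * max (sobolevWeightₑ m) (sobolevWeightₑ (n - m)) :=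
    calc sobolevWeightₑ n ≤ 2 * (sobolevWeightₑ m + sobolevWeightₑ (n - m)) := by
          simp only [sobolevWeightₑ]
          rw [← ENNReal.ofReal_add (sobolevWeight_pos m).le (sobolevWeight_pos _).le,
            ← ENNReal.ofReal_ofNat 2, ← ENNReal.ofReal_mul zero_le_two]
          exact ENNReal.ofReal_le_ofReal (sobolevWeight_le_two_mul_add n m)
      _ ≤ 2 * (2 * max (sobolevWeightₑ m) (sobolevWeightₑ (n - m))) := by
          rw [two_mul (max _ _)]; gcongr; exacts [le_max_left _ _, le_max_right _ _]
      _ = _ := by ring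
  calc sobolevWeightₑ n ^ t ≤ (4 * max (sobolevWeightₑ m) (sobolevWeightₑ (n - m))) ^ t :=
        ENNReal.rpow_le_rpow hmax ht
    _ = 4 ^ t * max (sobolevWeightₑ m ^ t) (sobolevWeightₑ (n - m) ^ t) := by
        rw [ENNReal.mul_rpow_of_nonneg _ _ ht, ENNReal.max_rpow ht]
    _ ≤ _ := by gcongr; exact max_le_add_of_nonneg zero_le zero_le

theorem tsum_sobolevWeightₑ_rpow_neg {s : ℝ} (hs : 1 < s) :
    ∑' n, sobolevWeightₑ n ^ (-s) = ENNReal.ofReal (∑' n, sobolevWeight n ^ (-s)) := by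
  rw [ENNReal.ofReal_tsum_of_nonneg
    (fun n => (Real.rpow_pos_of_pos (sobolevWeight_pos n) _).le)
    (summable_sobolevWeight_rpow_neg hs)]
  exact tsum_congr fun n => ENNReal.ofReal_rpow_of_pos (sobolevWeight_pos n)

theorem sq_tsum_le_tsum_sobolevWeightₑ_rpow_mul_sq {s : ℝ} (hs : 1 < s) (f : ℤ × ℤ → ℝ≥0∞) :
    (∑' n, f n) ^ 2 ≤
      ENNReal.ofReal (∑' n, sobolevWeight n ^ (-s)) * ∑' n, sobolevWeightₑ n ^ s * f n ^ 2 := by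
  have := sq_tsum_le_tsum_inv_mul_tsum_mul_sq (fun n => sobolevWeightₑ n ^ s) f
    (sobolevWeightₑ_rpow_ne_zero s)
    (fun n => ENNReal.rpow_ne_top_of_nonneg (by linarith) (sobolevWeightₑ_ne_top n))
  simpa only [← ENNReal.rpow_neg, tsum_sobolevWeightₑ_rpow_neg hs] using this

theorem tsum_sobolevWeightₑ_rpow_mul_conv_sq_le {r s₁ s₂ : ℝ} (hr0 : 0 ≤ r) (hrs₁ : r ≤ s₁)
    (hs₁s₂ : s₁ ≤ s₂) (hs₁ : 1 < s₁) (f g : ℤ × ℤ → ℝ≥0∞) :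
    ∑' n, sobolevWeightₑ n ^ r * conv f g n ^ 2 ≤
      ENNReal.ofReal (4 ^ r * 4 * ∑' n, sobolevWeight n ^ (-s₁)) *
        (∑' n, sobolevWeightₑ n ^ s₁ * f n ^ 2) * ∑' n, sobolevWeightₑ n ^ s₂ * g n ^ 2 := by
  set K := ENNReal.ofReal (∑' n, sobolevWeight n ^ (-s₁))
  set A := ∑' n, sobolevWeightₑ n ^ s₁ * f n ^ 2
  set B := ∑' n, sobolevWeightₑ n ^ s₂ * g n ^ 2
  have hsq : ∀ (t : ℝ) (h : ℤ × ℤ → ℝ≥0∞) n,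
      (sobolevWeightₑ n ^ (t / 2) * h n) ^ 2 = sobolevWeightₑ n ^ t * h n ^ 2 := fun t h n => by
    rw [mul_pow, ← ENNReal.rpow_natCast, ← ENNReal.rpow_mul]; norm_num
  have hweight : ∀ {t t' : ℝ} (h : ℤ × ℤ → ℝ≥0∞), t ≤ t' →
      ∑' n, (sobolevWeightₑ n ^ (t / 2) * h n) ^ 2 ≤ ∑' n, sobolevWeightₑ n ^ t' * h n ^ 2 :=
    fun h htt' => ENNReal.tsum_le_tsum fun n => by
      rw [hsq]; gcongr; exact one_le_sobolevWeightₑ n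
  have hf : (∑' n, f n) ^ 2 ≤ K * A := sq_tsum_le_tsum_sobolevWeightₑ_rpow_mul_sq hs₁ f
  have hg : (∑' n, g n) ^ 2 ≤ K * B := by
    refine (sq_tsum_le_tsum_sobolevWeightₑ_rpow_mul_sq hs₁ g).trans ?_
    gcongr K * ?_
    exact ENNReal.tsum_le_tsum fun n => by gcongr; exact one_le_sobolevWeightₑ n
  have hsplit := tsum_mul_conv_sq_le (fun n => sobolevWeightₑ n ^ (r / 2)) (4 ^ (r / 2))
    (sobolevWeightₑ_rpow_le (by linarith)) f g
  calc ∑' n, sobolevWeightₑ n ^ r * conv f g n ^ 2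
      = ∑' n, (sobolevWeightₑ n ^ (r / 2) * conv f g n) ^ 2 :=
        tsum_congr fun n => (hsq r (conv f g) n).symm
    _ ≤ 2 * (4 ^ (r / 2)) ^ 2 * ((K * B) * A + (K * A) * B) := by
        refine hsplit.trans ?_
        gcongr
        exacts [hweight f hrs₁, hweight g (hrs₁.trans hs₁s₂)]
    _ = _ := by
        rw [← ENNReal.rpow_natCast, ← ENNReal.rpow_mul, ENNReal.ofReal_mul (by positivity),
          ENNReal.ofReal_mul (by positivity), ← ENNReal.ofReal_rpow_of_pos (by norm_num)]
        norm_num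
        ring

theorem ofReal_sobolevWeight_rpow_mul_sq (s : ℝ) (z : ℂ) (n : ℤ × ℤ) :
    ENNReal.ofReal (sobolevWeight n ^ s * ‖z‖ ^ 2) = sobolevWeightₑ n ^ s * ‖z‖ₑ ^ 2 := by
  rw [ENNReal.ofReal_mul (Real.rpow_nonneg (sobolevWeight_pos n).le s),
    ← ENNReal.ofReal_rpow_of_pos (sobolevWeight_pos n), ENNReal.ofReal_pow (norm_nonneg z),
    ofReal_norm, sobolevWeightₑ]

theorem tsum_sobolevWeightₑ_rpow_mul_enorm_sq {s : ℝ} {c : ℤ × ℤ → ℂ}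
    (hc : Summable fun n => sobolevWeight n ^ s * ‖c n‖ ^ 2) :
    ∑' n, sobolevWeightₑ n ^ s * ‖c n‖ₑ ^ 2 =
      ENNReal.ofReal (∑' n, sobolevWeight n ^ s * ‖c n‖ ^ 2) := by
  rw [ENNReal.ofReal_tsum_of_nonneg (fun n => sobolevWeight_rpow_mul_sq_nonneg s (c n) n) hc]
  exact tsum_congr fun n => (ofReal_sobolevWeight_rpow_mul_sq s (c n) n).symm

theorem tsum_le_of_tsum_ofReal_le {ι : Type*} {x : ι → ℝ} (hx : ∀ i, 0 ≤ x i) {M : ℝ}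
    (hM : 0 ≤ M) (h : ∑' i, ENNReal.ofReal (x i) ≤ ENNReal.ofReal M) : ∑' i, x i ≤ M := by
  by_cases hsum : Summable x
  · rwa [← ENNReal.ofReal_tsum_of_nonneg hx hsum, ENNReal.ofReal_le_ofReal_iff hM] at h
  · rwa [tsum_eq_zero_of_not_summable hsum]

/-- Sobolev product estimate in Fourier form on the two-dimensional torus: for
`0 ≤ r ≤ s₁ ≤ s₂` with `s₁ > 1` there is `C > 0` (depending only on `r, s₁, s₂`)
so that for Fourier coefficients `c ∈ h^{s₁}` and `d ∈ h^{s₂}`, the convolution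
`e(n) = Σ_m c(m) d(n−m)` converges absolutely for each `n` and
`Σ_n (1+|n|²)^r |e(n)|² ≤ C A² B²`. -/
theorem stmt_14 (r s₁ s₂ : ℝ) (hr0 : 0 ≤ r) (hrs₁ : r ≤ s₁) (hs₁s₂ : s₁ ≤ s₂)
    (hs₁ : 1 < s₁) :
    ∃ C > 0, ∀ c d : ℤ × ℤ → ℂ,
      Summable (fun n : ℤ × ℤ => sobolevWeight n ^ s₁ * ‖c n‖ ^ 2) →
      Summable (fun n : ℤ × ℤ => sobolevWeight n ^ s₂ * ‖d n‖ ^ 2) →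
      (∀ n : ℤ × ℤ, Summable (fun m : ℤ × ℤ => ‖c m * d (n - m)‖)) ∧
      (∑' n : ℤ × ℤ, sobolevWeight n ^ r * ‖∑' m : ℤ × ℤ, c m * d (n - m)‖ ^ 2)
        ≤ C * (∑' n : ℤ × ℤ, sobolevWeight n ^ s₁ * ‖c n‖ ^ 2)
            * (∑' n : ℤ × ℤ, sobolevWeight n ^ s₂ * ‖d n‖ ^ 2) := by
  have hK := tsum_sobolevWeight_rpow_neg_pos hs₁
  refine ⟨4 ^ r * 4 * ∑' n, sobolevWeight n ^ (-s₁), by positivity, fun c d hc hd => ?_⟩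
  have hA : 0 ≤ ∑' n, sobolevWeight n ^ s₁ * ‖c n‖ ^ 2 :=
    tsum_nonneg fun n => sobolevWeight_rpow_mul_sq_nonneg s₁ (c n) n
  have hB : 0 ≤ ∑' n, sobolevWeight n ^ s₂ * ‖d n‖ ^ 2 :=
    tsum_nonneg fun n => sobolevWeight_rpow_mul_sq_nonneg s₂ (d n) n
  have key := tsum_sobolevWeightₑ_rpow_mul_conv_sq_le hr0 hrs₁ hs₁s₂ hs₁ (‖c ·‖ₑ) (‖d ·‖ₑ)
  rw [tsum_sobolevWeightₑ_rpow_mul_enorm_sq hc, tsum_sobolevWeightₑ_rpow_mul_enorm_sq hd,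
    ← ENNReal.ofReal_mul (by positivity), ← ENNReal.ofReal_mul (by positivity)] at key
  have hfinite := ne_top_of_tsum_mul_sq_le (sobolevWeightₑ_rpow_ne_zero r) ofReal_ne_top key
  refine ⟨fun n => tsum_enorm_ne_top_iff_summable_norm.mp (conv_enorm c d n ▸ hfinite n), ?_⟩
  refine tsum_le_of_tsum_ofReal_le (fun n => sobolevWeight_rpow_mul_sq_nonneg r _ n)
    (by positivity) ((ENNReal.tsum_le_tsum fun n => ?_).trans key)
  rw [ofReal_sobolevWeight_rpow_mul_sq, conv_enorm]
  gcongr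
  exact enorm_tsum_le_tsum_enorm
end
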